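/- Let Z > 0 and ρ > 0, ε₁ > 0. Define P_r = max{0, (ρZ - ε₁)/(ρ(1+ε₁)Z)} and ξ₁ = 1 - (1+ε₁)P_r. Then the event {Z < ε₁/(ρξ₁)} is equivalent to the event {Z < ε₁/ρ}. -/

import Mathlib

/-- CR-inspired NOMA power allocation: the NOMA outage event coincides with the OMA one. -/
theorem cr_noma_outage_equiv (Z ρ ε₁ : ℝ) (hZ : 0 < Z) (hρ : 0 < ρ) (hε : 0 < ε₁) :
    Z < ε₁ / (ρ * (1 - (1 + ε₁) * max 0 ((ρ * Z - ε₁) / (ρ * (1 + ε₁) * Z)))) ↔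
      Z < ε₁ / ρ := by
  have h1ε : (0:ℝ) < 1 + ε₁ := by linarith
  rcases le_or_gt (ρ * Z) ε₁ with h | h
  · have hmax : max 0 ((ρ * Z - ε₁) / (ρ * (1 + ε₁) * Z)) = 0 := by
      apply max_eq_left
      apply div_nonpos_of_nonpos_of_nonneg
      · linarith
      · positivity
    rw [hmax]
    ring_nf
  · have hden : ρ * (1 + ε₁) * Z ≠ 0 := by positivity
    have hmax : max 0 ((ρ * Z - ε₁) / (ρ * (1 + ε₁) * Z))
        = (ρ * Z - ε₁) / (ρ * (1 + ε₁) * Z) := by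
      apply max_eq_right
      apply div_nonneg (by linarith) (by positivity)
    rw [hmax]
    have hξ : 1 - (1 + ε₁) * ((ρ * Z - ε₁) / (ρ * (1 + ε₁) * Z)) = ε₁ / (ρ * Z) := by
      field_simp
      ring
    rw [hξ]
    have hE : ε₁ / (ρ * (ε₁ / (ρ * Z))) = Z := by
      field_simp
    rw [hE]
    constructor <;> intro hc
    · exact absurd hc (lt_irrefl Z)
    · exfalso
      rw [lt_div_iff₀ hρ] at hc
      linarith [mul_comm Z ρ]
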